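/- Let (X, {R_e}, {D_v}, {f_e}) be an E-algebraic branching system, M the K-module of functions X → K, S_e(φ) = χ_{R_e}·(φ ∘ f_e^{-1}), S_e^*(φ) = χ_{D_{r(e)}}·(φ ∘ f_e), and P_v(φ) = χ_{D_v}·φ. If v ∈ E^0 satisfies 0 < #{e : s(e)=v} < ∞, then P_v = Σ_{e: s(e)=v} S_e S_e^* in Hom_K(M). -/

import Mathlib

open scoped Classical

/-- An E-algebraic branching system for a directed graph with vertices `V`,
edges `E`, range map `r` and source map `s`, on a set (type) `X`. -/
structure AlgBranchingSystem {V E : Type*} (r s : E → V) (X : Type*) where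
  R : E → Set X
  D : V → Set X
  disjoint_R : ∀ ⦃e d : E⦄, e ≠ d → R e ∩ R d = ∅
  disjoint_D : ∀ ⦃u v : V⦄, u ≠ v → D u ∩ D v = ∅
  R_subset : ∀ e : E, R e ⊆ D (s e)
  D_eq_union : ∀ v : V, {e : E | s e = v}.Finite → {e : E | s e = v}.Nonempty →
      D v = ⋃ e ∈ {e : E | s e = v}, R e
  f : E → X → X
  g : E → X → X
  f_mapsTo : ∀ e : E, Set.MapsTo (f e) (D (r e)) (R e)
  g_mapsTo : ∀ e : E, Set.MapsTo (g e) (R e) (D (r e))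
  g_f : ∀ e : E, ∀ x ∈ D (r e), g e (f e x) = x
  f_g : ∀ e : E, ∀ x ∈ R e, f e (g e x) = x

namespace AlgBranchingSystem

variable {V E : Type*} {r s : E → V} {X : Type*} (K : Type*) [Field K]

/-- The operator `P_v : φ ↦ χ_{D_v} · φ` on the module of all functions `X → K`. -/
noncomputable def P (B : AlgBranchingSystem r s X) (v : V) : Module.End K (X → K) where
  toFun φ := (B.D v).indicator φ
  map_add' φ ψ := by
    funext x
    by_cases h : x ∈ B.D v <;> simp [Set.indicator_of_mem, Set.indicator_of_notMem, h]
  map_smul' c φ := by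
    funext x
    by_cases h : x ∈ B.D v <;> simp [Set.indicator_of_mem, Set.indicator_of_notMem, h]

/-- The operator `S_e : φ ↦ χ_{R_e} · (φ ∘ f_e⁻¹)`. -/
noncomputable def S (B : AlgBranchingSystem r s X) (e : E) : Module.End K (X → K) where
  toFun φ := (B.R e).indicator fun x => φ (B.g e x)
  map_add' φ ψ := by
    funext x
    by_cases h : x ∈ B.R e <;> simp [Set.indicator_of_mem, Set.indicator_of_notMem, h]
  map_smul' c φ := by
    funext x
    by_cases h : x ∈ B.R e <;> simp [Set.indicator_of_mem, Set.indicator_of_notMem, h]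

/-- The operator `S_e^* : φ ↦ χ_{D_{r(e)}} · (φ ∘ f_e)`. -/
noncomputable def Sstar (B : AlgBranchingSystem r s X) (e : E) : Module.End K (X → K) where
  toFun φ := (B.D (r e)).indicator fun x => φ (B.f e x)
  map_add' φ ψ := by
    funext x
    by_cases h : x ∈ B.D (r e) <;> simp [Set.indicator_of_mem, Set.indicator_of_notMem, h]
  map_smul' c φ := by
    funext x
    by_cases h : x ∈ B.D (r e) <;> simp [Set.indicator_of_mem, Set.indicator_of_notMem, h]

end AlgBranchingSystem

/-! Each `S_e S_e^*` is multiplication by `χ_{R_e}`, and `D_v` is the disjoint union of the `R_e`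
with `s(e) = v`, so `χ_{D_v} = Σ_{s(e) = v} χ_{R_e}`. -/

namespace AlgBranchingSystem

variable {V E : Type*} {r s : E → V} {X : Type*} (K : Type*) [Field K]
  (B : AlgBranchingSystem r s X)

theorem pairwiseDisjoint_R (t : Set E) : t.PairwiseDisjoint B.R :=
  fun _ _ _ _ hne => Set.disjoint_iff_inter_eq_empty.mpr (B.disjoint_R hne)

theorem D_eq_biUnion_toFinset {v : V} (h : {e : E | s e = v}.Finite)
    (hne : {e : E | s e = v}.Nonempty) : B.D v = ⋃ e ∈ h.toFinset, B.R e := by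
  simp only [B.D_eq_union v h hne, Set.Finite.mem_toFinset]

theorem P_apply (v : V) (φ : X → K) : B.P K v φ = (B.D v).indicator φ := rfl

theorem S_mul_Sstar_apply (e : E) (φ : X → K) :
    (B.S K e * B.Sstar K e) φ = (B.R e).indicator φ := by
  funext x
  change (B.R e).indicator (fun y => (B.D (r e)).indicator (fun z => φ (B.f e z)) (B.g e y)) x
    = (B.R e).indicator φ x
  by_cases hx : x ∈ B.R e
  · rw [Set.indicator_of_mem hx, Set.indicator_of_mem hx,
      Set.indicator_of_mem (B.g_mapsTo e hx), B.f_g e x hx]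
  · rw [Set.indicator_of_notMem hx, Set.indicator_of_notMem hx]

end AlgBranchingSystem

/-- if `v` emits finitely many, and at least one, edges then
`P_v = Σ_{e : s(e) = v} S_e S_e^*`. -/
theorem P_eq_sum_S_Sstar {V E : Type*} (r s : E → V) {X : Type*}
    (K : Type*) [Field K] (B : AlgBranchingSystem r s X) (v : V)
    (h : {e : E | s e = v}.Finite) (hne : {e : E | s e = v}.Nonempty) :
    B.P K v = ∑ e ∈ h.toFinset, B.S K e * B.Sstar K e := by
  ext φ : 1
  rw [B.P_apply K, B.D_eq_biUnion_toFinset h hne,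
    Finset.indicator_biUnion _ _ (B.pairwiseDisjoint_R _), LinearMap.sum_apply]
  simp only [B.S_mul_Sstar_apply K]
  exact (Finset.sum_fn _ _).symm
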